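/- Let m ≥ 1 and let the alphabet be α = (Bool × Bool) ⊕ Fin m. Let S : ℕ → α be computably unpredictable. Let B : Bool → Bool → ℕ → Bool be such that the uncurried map (x, y, n) ↦ B x y n is computable, and let s : ℕ → Bool → Bool → ℕ → Bool be such that the uncurried map (i, x, y, n) ↦ s i x y n is computable and there exists i₀ with s i₀ = B. Define the learner G : ℕ → ℕ by letting G n be the least index i such that for all j < n, if S j = Sum.inl (x, y) then s i x y j = B x y j. Then there exist N and an index i such that G n = i for all n ≥ N, and moreover s i x y n = B x y n for all but finitely many n and all x, y ∈ Bool. -/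

import Mathlib

/-!
Consistency with the first `n` learning rounds only gets harder as `n` grows, so the learner's
guess `G n` is nondecreasing; it never exceeds an index `i₀` of `B`, hence it settles on some
index `i` which is consistent with every learning round. If `s i` and `B` disagreed at input
`(x, y)` infinitely often, the disagreement rounds would form an infinite computable set on which
`S` never takes the value `(x, y)`: computable unpredictability forbids exactly this.
-/

theorem Nat.exists_forall_ge_eq_of_monotone {f : ℕ → ℕ} (hf : Monotone f)
    (hb : BddAbove (Set.range f)) : ∃ N, ∀ n, N ≤ n → f n = f N := by
  obtain ⟨N, hN⟩ := Nat.sSup_mem (Set.range_nonempty f) hb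
  exact ⟨N, fun n hn => le_antisymm (hN ▸ le_csSup hb ⟨n, rfl⟩) (hf hn)⟩

section LeastConsistentIndex

variable {C : ℕ → Set ℕ} {G : ℕ → ℕ}

theorem monotone_of_isLeast_of_antitone (hC : Antitone C) (hG : ∀ n, IsLeast (C n) (G n)) :
    Monotone G :=
  fun _ _ hab => (hG _).2 (hC hab (hG _).1)

theorem exists_eventually_eq_of_isLeast_of_antitone (hC : Antitone C)
    (hG : ∀ n, IsLeast (C n) (G n)) {i₀ : ℕ} (hi₀ : ∀ n, i₀ ∈ C n) :
    ∃ N i, (∀ n, N ≤ n → G n = i) ∧ ∀ n, i ∈ C n := by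
  have hbdd : BddAbove (Set.range G) := ⟨i₀, by rintro _ ⟨n, rfl⟩; exact (hG n).2 (hi₀ n)⟩
  obtain ⟨N, hN⟩ :=
    Nat.exists_forall_ge_eq_of_monotone (monotone_of_isLeast_of_antitone hC hG) hbdd
  refine ⟨N, G N, hN, fun n => ?_⟩
  have hmax : G (max N n) = G N := hN _ (le_max_left N n)
  exact hC (le_max_right N n) (hmax ▸ (hG (max N n)).1)

end LeastConsistentIndex

section Unpredictable

variable {α : Type*}

def ComputablyUnpredictable (S : ℕ → α) : Prop :=
  ∀ Γ : Set α, Γ.Nonempty → Γ ≠ Set.univ →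
    ∀ g : ℕ → Bool, Computable g → {n | g n = true}.Infinite →
      {n | g n = true ∧ S n ∈ Γ}.Infinite

theorem ComputablyUnpredictable.finite_of_forall_ne [Nontrivial α] {S : ℕ → α}
    (hS : ComputablyUnpredictable S) {g : ℕ → Bool} (hg : Computable g) (a : α)
    (hga : ∀ n, g n = true → S n ≠ a) : {n | g n = true}.Finite := by
  by_contra hinf
  obtain ⟨n, hgn, hSn⟩ := (hS {a} (Set.singleton_nonempty a) (Set.singleton_ne_univ a) g hg
    hinf).nonempty
  exact hga n hgn hSn

end Unpredictable

theorem Computable.bne {β : Type*} [Primcodable β] {f g : β → Bool} (hf : Computable f)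
    (hg : Computable g) : Computable fun b => f b != g b :=
  Primrec.not.to_comp.comp (Primrec.beq.to_comp.comp hf hg)

theorem learner_converges_to_box_general (m : ℕ)
    (S : ℕ → (Bool × Bool) ⊕ Fin m)
    (hS : ∀ Γ : Set ((Bool × Bool) ⊕ Fin m), Γ.Nonempty → Γ ≠ Set.univ →
      ∀ g : ℕ → Bool, Computable g → {n | g n = true}.Infinite →
        {n | g n = true ∧ S n ∈ Γ}.Infinite)
    (B : Bool → Bool → ℕ → Bool)
    (s : ℕ → Bool → Bool → ℕ → Bool)
    (hs : Computable (fun p : ℕ × Bool × Bool × ℕ => s p.1 p.2.1 p.2.2.1 p.2.2.2))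
    (hs0 : ∃ i₀, s i₀ = B)
    (G : ℕ → ℕ)
    (hG : ∀ n, IsLeast
      {i : ℕ | ∀ j < n, ∀ x y : Bool, S j = Sum.inl (x, y) → s i x y j = B x y j}
      (G n)) :
    ∃ N i, (∀ n, N ≤ n → G n = i) ∧
      {n : ℕ | ∃ x y : Bool, s i x y n ≠ B x y n}.Finite := by
  obtain ⟨i₀, rfl⟩ := hs0
  have : Nontrivial ((Bool × Bool) ⊕ Fin m) := Sum.inl_injective.nontrivial
  have hanti : Antitone fun n =>
      {i : ℕ | ∀ j < n, ∀ x y : Bool, S j = Sum.inl (x, y) → s i x y j = s i₀ x y j} :=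
    fun _ _ hab _ hi j hj => hi j (lt_of_lt_of_le hj hab)
  obtain ⟨N, i, hGi, hi⟩ :=
    exists_eventually_eq_of_isLeast_of_antitone hanti hG fun _ _ _ _ _ _ => rfl
  have hagree : ∀ n x y, S n = Sum.inl (x, y) → s i x y n = s i₀ x y n :=
    fun n => hi (n + 1) n n.lt_succ_self
  refine ⟨N, i, hGi, ?_⟩
  simp only [Set.ofPred_exists]
  refine Set.finite_iUnion fun x => Set.finite_iUnion fun y => ?_
  have hsection : ∀ k, Computable fun n => s k x y n := fun k =>
    hs.comp ((Computable.const k).pair ((Computable.const x).pair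
      ((Computable.const y).pair Computable.id)))
  simpa only [bne_iff_ne] using ComputablyUnpredictable.finite_of_forall_ne hS
    ((hsection i).bne (hsection i₀)) (Sum.inl (x, y)) fun n hne hSn =>
      bne_iff_ne.mp hne (hagree n x y hSn)

/-- Analogue of Lemma 2 (property P1): if the switching sequence `S` over the
    alphabet `(Bool × Bool) ⊕ Fin m` is computably unpredictable, `B` is a
    computable box function occurring in the computable enumeration `s`, and `G`
    is the enumeration learner trained on the learning rounds of `S`, then `G`
    converges to an index `i` such that `s i` agrees with `B` on all but finitely
    many rounds (for all inputs `x, y`). -/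
theorem learner_converges_to_box (m : ℕ) (hm : 1 ≤ m)
    (S : ℕ → (Bool × Bool) ⊕ Fin m)
    (hS : ∀ Γ : Set ((Bool × Bool) ⊕ Fin m), Γ.Nonempty → Γ ≠ Set.univ →
      ∀ g : ℕ → Bool, Computable g → {n | g n = true}.Infinite →
        {n | g n = true ∧ S n ∈ Γ}.Infinite)
    (B : Bool → Bool → ℕ → Bool)
    (hB : Computable (fun p : Bool × Bool × ℕ => B p.1 p.2.1 p.2.2))
    (s : ℕ → Bool → Bool → ℕ → Bool)
    (hs : Computable (fun p : ℕ × Bool × Bool × ℕ => s p.1 p.2.1 p.2.2.1 p.2.2.2))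
    (hs0 : ∃ i₀, s i₀ = B)
    (G : ℕ → ℕ)
    (hG : ∀ n, IsLeast
      {i : ℕ | ∀ j < n, ∀ x y : Bool, S j = Sum.inl (x, y) → s i x y j = B x y j}
      (G n)) :
    ∃ N i, (∀ n, N ≤ n → G n = i) ∧
      {n : ℕ | ∃ x y : Bool, s i x y n ≠ B x y n}.Finite :=
  learner_converges_to_box_general m S hS B s hs hs0 G hG
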